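/- Let d ≥ 2 be an integer; set C_star = (1/d)·((d+1)/2)^{(d+1)/d} and η_star = 2/(d+1), and for C > 0 define ψ_C(η) = η^{1−1/d} + C(1−η)² on [0,1]. Then: (i) if 0 < C < C_star, then ψ_C(η) > ψ_C(0) for all η ∈ (0,1], so that η = 0 is the unique minimizer of ψ_C on [0,1]; (ii) if C = C_star, then ψ_C(η_star) = ψ_C(0) = C_star; (iii) if C > C_star, then there exists η ∈ (0,1] with ψ_C(η) < ψ_C(0), and every minimizer η_c of ψ_C over [0,1] satisfies η_c ≥ η_star. -/

import Mathlib

/-!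
Since `ψ_C(η) - ψ_C(0) = η^{1-1/d} - C η(2-η)`, everything rests on the inequality
`C_star η(2-η) ≤ η^{1-1/d}` on `[0,1]`, with equality at `η_star`. Raised to the `d`-th power it
becomes AM-GM for `(d+1)η/2` and `d` copies of `(d+1)(2-η)/(2d)`, whose mean is `1`; both are `1`
exactly at `η_star`. For `C > C_star`, since `η(2-η)` increases on `[0,1]`, every `η < η_star`
does strictly worse than `η_star`.
-/

noncomputable section

/-- `C_star = (1/d)((d+1)/2)^{(d+1)/d}`. -/
def Cstar (d : ℕ) : ℝ := (1/(d:ℝ)) * (((d:ℝ)+1)/2) ^ (((d:ℝ)+1)/(d:ℝ))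

/-- `η_star = 2/(d+1)`. -/
def etaStar (d : ℕ) : ℝ := 2/((d:ℝ)+1)

/-- `ψ_C(η) = η^{1-1/d} + C(1-η)²`. -/
def psiC (d : ℕ) (C η : ℝ) : ℝ := η ^ (1 - 1/(d:ℝ)) + C * (1-η)^2

/-- AM-GM for `u` and `n` copies of `v`, whose arithmetic mean is `1`. -/
theorem mul_pow_le_one_of_add_mul_eq {u v : ℝ} (n : ℕ) (hv : 0 < v) (h : u + n * v = n + 1) :
    u * v ^ n ≤ 1 :=
  have bernoulli : 1 + ((n + 1 : ℕ) : ℝ) * (v⁻¹ - 1) ≤ (1 + (v⁻¹ - 1)) ^ (n + 1) :=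
    one_add_mul_le_pow (by linarith [inv_pos.2 hv]) (n + 1)
  calc u * v ^ n = (1 + ((n + 1 : ℕ) : ℝ) * (v⁻¹ - 1)) * v ^ (n + 1) := by
        rw [show u = n + 1 - n * v by linarith]
        field_simp
        push_cast
        ring
    _ ≤ (1 + (v⁻¹ - 1)) ^ (n + 1) * v ^ (n + 1) := by gcongr
    _ = 1 := by rw [add_sub_cancel, ← mul_pow, inv_mul_cancel₀ hv.ne', one_pow]

theorem Cstar_nonneg (d : ℕ) : 0 ≤ Cstar d := by
  unfold Cstar
  positivity

theorem etaStar_pos (d : ℕ) : 0 < etaStar d := by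
  unfold etaStar
  positivity

theorem etaStar_le_one {d : ℕ} (hd : 1 ≤ d) : etaStar d ≤ 1 := by
  have : (1 : ℝ) ≤ d := by exact_mod_cast hd
  unfold etaStar
  rw [div_le_one (by linarith)]
  linarith

theorem Cstar_pow {d : ℕ} (hd : d ≠ 0) :
    Cstar d ^ d = (1 / (d : ℝ)) ^ d * (((d : ℝ) + 1) / 2) ^ (d + 1) := by
  have hd' : (d : ℝ) ≠ 0 := by exact_mod_cast hd
  rw [Cstar, mul_pow, ← Real.rpow_natCast (_ ^ _), ← Real.rpow_mul (by positivity),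
    div_mul_cancel₀ _ hd']
  norm_cast

/-- With `u = (d+1)η/2` and `v = (d+1)(2-η)/(2d)` we have `u + d v = d + 1`, and `u = v = 1`
exactly at `η = η_star`. -/
theorem Cstar_pow_mul_eq {d : ℕ} (hd : d ≠ 0) (η : ℝ) :
    Cstar d ^ d * (η * (2 - η) ^ d) =
      (((d : ℝ) + 1) * η / 2) * (((d : ℝ) + 1) * (2 - η) / (2 * d)) ^ d := by
  rw [Cstar_pow hd, show ((d : ℝ) + 1) * (2 - η) / (2 * d) = ((d + 1) / 2) * (2 - η) * (1 / d) by
    field_simp, mul_pow, mul_pow]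
  ring

theorem rpow_one_sub_inv_pow {d : ℕ} (hd : d ≠ 0) {η : ℝ} (hη : 0 ≤ η) :
    (η ^ (1 - 1 / (d : ℝ))) ^ d = η ^ (d - 1) := by
  have hd' : (d : ℝ) ≠ 0 := by exact_mod_cast hd
  rw [← Real.rpow_natCast (_ ^ _), ← Real.rpow_mul hη, ← Real.rpow_natCast,
    Nat.cast_sub (Nat.one_le_iff_ne_zero.2 hd), sub_mul, one_div_mul_cancel hd']
  simp

theorem Cstar_mul_pow_eq {d : ℕ} (hd : d ≠ 0) {η : ℝ} (hη : 0 ≤ η) :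
    (Cstar d * (η * (2 - η))) ^ d =
      (η ^ (1 - 1 / (d : ℝ))) ^ d * (Cstar d ^ d * (η * (2 - η) ^ d)) := by
  obtain ⟨k, rfl⟩ := Nat.exists_eq_add_one_of_ne_zero hd
  rw [rpow_one_sub_inv_pow hd hη, Nat.add_sub_cancel, mul_pow, mul_pow]
  ring

theorem Cstar_mul_le_rpow {d : ℕ} (hd : d ≠ 0) {η : ℝ} (hη₀ : 0 ≤ η) (hη₂ : η < 2) :
    Cstar d * (η * (2 - η)) ≤ η ^ (1 - 1 / (d : ℝ)) := by
  refine le_of_pow_le_pow_left₀ hd (Real.rpow_nonneg hη₀ _) ?_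
  rw [Cstar_mul_pow_eq hd hη₀]
  refine mul_le_of_le_one_right (by positivity) ?_
  rw [Cstar_pow_mul_eq hd]
  refine mul_pow_le_one_of_add_mul_eq d (by positivity) ?_
  field_simp
  ring

theorem Cstar_mul_etaStar_eq {d : ℕ} (hd : d ≠ 0) :
    Cstar d * (etaStar d * (2 - etaStar d)) = etaStar d ^ (1 - 1 / (d : ℝ)) := by
  have hη := etaStar_pos d
  have hη₁ := etaStar_le_one (Nat.one_le_iff_ne_zero.2 hd)
  refine (pow_left_inj₀ (mul_nonneg (Cstar_nonneg d) (by nlinarith))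
    (Real.rpow_nonneg hη.le _) hd).1 ?_
  have hu : ((d : ℝ) + 1) * etaStar d / 2 = 1 := by
    unfold etaStar
    field_simp
  have hv : ((d : ℝ) + 1) * (2 - etaStar d) / (2 * d) = 1 := by
    unfold etaStar
    field_simp
    ring
  rw [Cstar_mul_pow_eq hd hη.le, Cstar_pow_mul_eq hd, hu, hv, one_pow, mul_one, mul_one]

theorem psiC_eq (d : ℕ) (C η : ℝ) :
    psiC d C η = η ^ (1 - 1 / (d : ℝ)) - C * (η * (2 - η)) + C := by
  unfold psiC
  ring

theorem psiC_zero {d : ℕ} (hd : d ≠ 1) (C : ℝ) : psiC d C 0 = C := by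
  have : (1 : ℝ) - 1 / d ≠ 0 := by
    rw [sub_ne_zero, ne_comm, one_div, Ne, inv_eq_one]
    exact_mod_cast hd
  rw [psiC_eq, Real.zero_rpow this]
  ring

theorem psiC_etaStar_lt {d : ℕ} (hd : 1 ≤ d) {C : ℝ} (hC : Cstar d < C) {η : ℝ}
    (hη₀ : 0 ≤ η) (hη : η < etaStar d) : psiC d C (etaStar d) < psiC d C η := by
  have hd' : d ≠ 0 := Nat.one_le_iff_ne_zero.1 hd
  have hstar := etaStar_le_one hd
  have hle := Cstar_mul_le_rpow hd' hη₀ (by linarith)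
  have hmono : η * (2 - η) < etaStar d * (2 - etaStar d) := by nlinarith
  have hgain : 0 < (C - Cstar d) * (etaStar d * (2 - etaStar d) - η * (2 - η)) :=
    mul_pos (by linarith) (by linarith)
  rw [psiC_eq, psiC_eq, ← Cstar_mul_etaStar_eq hd']
  nlinarith

theorem psiC_minimization_general (d : ℕ) (hd : 2 ≤ d) (C : ℝ) :
    (C < Cstar d → ∀ η ∈ Set.Ioc (0:ℝ) 1, psiC d C 0 < psiC d C η) ∧
    (C = Cstar d → psiC d C (etaStar d) = psiC d C 0 ∧ psiC d C 0 = Cstar d) ∧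
    (Cstar d < C →
      (∃ η ∈ Set.Ioc (0:ℝ) 1, psiC d C η < psiC d C 0) ∧
      ∀ ηc ∈ Set.Icc (0:ℝ) 1,
        (∀ η ∈ Set.Icc (0:ℝ) 1, psiC d C ηc ≤ psiC d C η) → etaStar d ≤ ηc) := by
  have hd₀ : d ≠ 0 := by omega
  have hd₁ : 1 ≤ d := by omega
  have hstar : etaStar d ∈ Set.Ioc (0 : ℝ) 1 := ⟨etaStar_pos d, etaStar_le_one hd₁⟩
  have hzero : psiC d C 0 = C := psiC_zero (by omega) C
  refine ⟨fun hC η ⟨hη₀, hη₁⟩ => ?_, fun hC => ?_, fun hC => ⟨?_, ?_⟩⟩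
  · have hle := Cstar_mul_le_rpow hd₀ hη₀.le (by linarith)
    have hq : 0 < (Cstar d - C) * (η * (2 - η)) := mul_pos (by linarith) (by nlinarith)
    rw [hzero, psiC_eq]
    linarith
  · subst hC
    rw [psiC_eq, ← Cstar_mul_etaStar_eq hd₀, hzero]
    exact ⟨by ring, rfl⟩
  · have hq : 0 < (C - Cstar d) * (etaStar d * (2 - etaStar d)) :=
      mul_pos (by linarith) (by nlinarith [hstar.1, hstar.2])
    refine ⟨etaStar d, hstar, ?_⟩
    rw [hzero, psiC_eq, ← Cstar_mul_etaStar_eq hd₀]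
    linarith
  · intro ηc ⟨hc₀, _⟩ hmin
    by_contra! hlt
    exact (psiC_etaStar_lt hd₁ hC hc₀ hlt).not_ge (hmin _ (Set.Ioc_subset_Icc_self hstar))

/-- Minimization of `ψ_C` on `[0,1]`: (i) for `C < C_star`, `η = 0` is the unique
minimizer; (ii) for `C = C_star`, `ψ_C(η_star) = ψ_C(0) = C_star`; (iii) for
`C > C_star` some `η ∈ (0,1]` does better than `0`, and every minimizer is `≥ η_star`. -/
theorem psiC_minimization (d : ℕ) (hd : 2 ≤ d) (C : ℝ) (hC : 0 < C) :
    (C < Cstar d → ∀ η ∈ Set.Ioc (0:ℝ) 1, psiC d C 0 < psiC d C η) ∧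
    (C = Cstar d → psiC d C (etaStar d) = psiC d C 0 ∧ psiC d C 0 = Cstar d) ∧
    (Cstar d < C →
      (∃ η ∈ Set.Ioc (0:ℝ) 1, psiC d C η < psiC d C 0) ∧
      ∀ ηc ∈ Set.Icc (0:ℝ) 1,
        (∀ η ∈ Set.Icc (0:ℝ) 1, psiC d C ηc ≤ psiC d C η) → etaStar d ≤ ηc) :=
  psiC_minimization_general d hd C

end
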